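/- arXiv:2106.09315 — 5 statements merged into one kernel-verified Lean document; each statement's English description precedes it below -/
import Mathlib

section
/- Let u, v ∈ K with ‖u‖ < 1 and ‖v‖ < 1, and let ε be a real number with ‖u − v‖ ≤ ε ≤ p^{−1/(p−1)}. Then the series ∑_{i≥1} u^i/i and ∑_{i≥1} v^i/i are summable in K and ‖∑_{i≥1} u^i/i − ∑_{i≥1} v^i/i‖ ≤ ε. (Equivalently, writing log(1−t) := −∑_{i≥1} t^i/i on the open unit ball, one has ‖log(1−u) − log(1−v)‖ ≤ ε.) -/
/-!
By the ultrametric inequality it suffices to show `‖uⁱ - vⁱ‖ ≤ ε ‖i‖` for every `i`, so that each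
term `(uⁱ - vⁱ)/i` has norm at most `ε`. For `p ∤ i` we have `‖i‖ = 1` and the factorisation of
`uⁱ - vⁱ` by `u - v` suffices. For `i = p j` write `δ = ε ‖j‖`; in the binomial expansion of
`(vʲ + (uʲ - vʲ))ᵖ - vᵖʲ` the middle coefficients are divisible by `p`, so
`‖uᵖʲ - vᵖʲ‖ ≤ max (‖p‖ δ) (δᵖ)`, and `ε ≤ p^{-1/(p-1)}` is exactly what makes `δᵖ ≤ ‖p‖ δ`.
-/

open Finset

namespace Padic

variable {p : ℕ} [Fact p.Prime]

lemma inv_natCast_le_norm (n : ℕ) : (n : ℝ)⁻¹ ≤ ‖(n : ℚ_[p])‖ := by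
  rcases eq_or_ne n 0 with rfl | hn
  · simp
  have hp : (0 : ℝ) < p := by exact_mod_cast (Fact.out : p.Prime).pos
  rw [norm_eq_zpow_neg_valuation (by exact_mod_cast hn), valuation_natCast, zpow_neg,
    zpow_natCast]
  gcongr
  exact_mod_cast Nat.le_of_dvd (Nat.pos_of_ne_zero hn) pow_padicValNat_dvd

end Padic

lemma pow_pred_le_inv_of_le_rpow {p : ℕ} (hp : 1 < p) {ε : ℝ} (hε₀ : 0 ≤ ε)
    (hε : ε ≤ (p : ℝ) ^ (-1 / ((p : ℝ) - 1))) : ε ^ (p - 1) ≤ (p : ℝ)⁻¹ := by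
  have hp' : (1 : ℝ) < p := by exact_mod_cast hp
  calc ε ^ (p - 1) ≤ ((p : ℝ) ^ (-1 / ((p : ℝ) - 1))) ^ (p - 1) := by gcongr
    _ = (p : ℝ)⁻¹ := by
      rw [← Real.rpow_natCast, ← Real.rpow_mul (by positivity), Nat.cast_pred (by omega),
        div_mul_cancel₀ _ (by linarith), Real.rpow_neg_one]

section Ultrametric

variable {K : Type*} [NormedField K] [IsUltrametricDist K]

lemma norm_pow_sub_pow_le_norm_sub {u v : K} (hu : ‖u‖ ≤ 1) (hv : ‖v‖ ≤ 1) (n : ℕ) :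
    ‖u ^ n - v ^ n‖ ≤ ‖u - v‖ := by
  rw [← geom_sum₂_mul, norm_mul]
  refine mul_le_of_le_one_left (norm_nonneg _) <|
    IsUltrametricDist.norm_sum_le_of_forall_le_of_nonneg zero_le_one fun k _ => ?_
  rw [norm_mul, norm_pow, norm_pow]
  exact mul_le_one₀ (pow_le_one₀ (norm_nonneg _) hu) (by positivity)
    (pow_le_one₀ (norm_nonneg _) hv)

lemma norm_pow_prime_sub_pow_le {p : ℕ} (hp : p.Prime) {x y : K} (hx : ‖x‖ ≤ 1)
    (hy : ‖y‖ ≤ 1) : ‖x ^ p - y ^ p‖ ≤ max (‖(p : K)‖ * ‖x - y‖) (‖x - y‖ ^ p) := by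
  have hxy : ‖x - y‖ ≤ 1 := by
    rw [sub_eq_add_neg]
    exact (IsUltrametricDist.norm_add_le_max x (-y)).trans (max_le hx (by rwa [norm_neg]))
  have hexpand : x ^ p - y ^ p = ∑ k ∈ range p, y ^ k * (x - y) ^ (p - k) * (p.choose k : K) := by
    rw [← add_sub_cancel y x, add_pow, sum_range_succ]
    simp
  rw [hexpand]
  refine IsUltrametricDist.norm_sum_le_of_forall_le_of_nonneg (by positivity) fun k hk => ?_
  rcases eq_or_ne k 0 with rfl | hk₀
  · simp
  obtain ⟨m, hm⟩ := hp.dvd_choose_self hk₀ (mem_range.mp hk)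
  have hchoose : ‖(p.choose k : K)‖ ≤ ‖(p : K)‖ := by
    rw [hm, Nat.cast_mul, norm_mul]
    exact mul_le_of_le_one_right (norm_nonneg _) (IsUltrametricDist.norm_natCast_le_one K m)
  have hpow : ‖(x - y) ^ (p - k)‖ ≤ ‖x - y‖ := by
    rw [norm_pow]
    exact pow_le_of_le_one (norm_nonneg _) hxy (by have := mem_range.mp hk; omega)
  have hyk : ‖y ^ k‖ ≤ 1 := by
    rw [norm_pow]
    exact pow_le_one₀ (norm_nonneg _) hy
  refine le_max_of_le_left ?_
  rw [norm_mul, norm_mul, mul_comm ‖(p : K)‖]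
  calc ‖y ^ k‖ * ‖(x - y) ^ (p - k)‖ * ‖(p.choose k : K)‖
      ≤ 1 * ‖x - y‖ * ‖(p : K)‖ := by gcongr
    _ = ‖x - y‖ * ‖(p : K)‖ := by rw [one_mul]

lemma norm_pow_sub_pow_le_mul_norm_natCast {p : ℕ} (hp : p.Prime)
    (hcoprime : ∀ n : ℕ, ¬p ∣ n → ‖(n : K)‖ = 1) {u v : K} (hu : ‖u‖ ≤ 1) (hv : ‖v‖ ≤ 1)
    {ε : ℝ} (huv : ‖u - v‖ ≤ ε) (hε : ε ^ (p - 1) ≤ ‖(p : K)‖) (n : ℕ) :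
    ‖u ^ n - v ^ n‖ ≤ ε * ‖(n : K)‖ := by
  have hε₀ : 0 ≤ ε := (norm_nonneg _).trans huv
  induction n using Nat.strong_induction_on with
  | _ n ih =>
  rcases eq_or_ne n 0 with rfl | hn₀
  · simp
  by_cases hdvd : p ∣ n
  · obtain ⟨j, rfl⟩ := hdvd
    have hj : j < p * j := lt_mul_left (Nat.pos_of_ne_zero (right_ne_zero_of_mul hn₀)) hp.one_lt
    set w := u ^ j - v ^ j
    have hw : ‖w‖ ≤ ε * ‖(j : K)‖ := ih j hj
    have hwε : ‖w‖ ≤ ε :=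
      hw.trans (mul_le_of_le_one_right hε₀ (IsUltrametricDist.norm_natCast_le_one K j))
    have hwp : ‖w‖ ^ p ≤ ‖(p : K)‖ * ‖w‖ := by
      calc ‖w‖ ^ p = ‖w‖ ^ (p - 1) * ‖w‖ := by rw [← pow_succ, Nat.sub_add_cancel hp.one_le]
        _ ≤ ε ^ (p - 1) * ‖w‖ := by gcongr
        _ ≤ ‖(p : K)‖ * ‖w‖ := by gcongr
    have hstep := norm_pow_prime_sub_pow_le hp (x := u ^ j) (y := v ^ j)
      (by rw [norm_pow]; exact pow_le_one₀ (norm_nonneg _) hu)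
      (by rw [norm_pow]; exact pow_le_one₀ (norm_nonneg _) hv)
    rw [← pow_mul', ← pow_mul', max_eq_left hwp] at hstep
    calc ‖u ^ (p * j) - v ^ (p * j)‖ ≤ ‖(p : K)‖ * ‖w‖ := hstep
      _ ≤ ‖(p : K)‖ * (ε * ‖(j : K)‖) := by gcongr
      _ = ε * ‖((p * j : ℕ) : K)‖ := by rw [Nat.cast_mul, norm_mul]; ring
  · rw [hcoprime n hdvd, mul_one]
    exact (norm_pow_sub_pow_le_norm_sub hu hv n).trans huv

lemma summable_pow_div_natCast [CompleteSpace K] (hnat : ∀ n : ℕ, (n : ℝ)⁻¹ ≤ ‖(n : K)‖)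
    {u : K} (hu : ‖u‖ < 1) : Summable (fun n : ℕ => u ^ n / n) := by
  refine NonarchimedeanAddGroup.summable_of_tendsto_cofinite_zero ?_
  rw [Nat.cofinite_eq_atTop, tendsto_zero_iff_norm_tendsto_zero]
  refine squeeze_zero (fun _ => norm_nonneg _) (fun n => ?_)
    (tendsto_self_mul_const_pow_of_lt_one (norm_nonneg u) hu)
  rw [norm_div, norm_pow, div_eq_mul_inv, mul_comm]
  rcases eq_or_ne n 0 with rfl | hn
  · simp
  gcongr
  exact inv_le_of_inv_le₀ (by positivity) (hnat n)

end Ultrametric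

/-- continuity-type bound for the p-adic logarithm series.
If `‖u‖ < 1`, `‖v‖ < 1` and `‖u - v‖ ≤ ε ≤ p^{-1/(p-1)}`, then the series
`∑_{i≥1} uⁱ/i` and `∑_{i≥1} vⁱ/i` are summable and their sums differ by at most `ε`.
(The `i = 0` term of `fun i : ℕ => uⁱ/(i : K)` vanishes since division by zero is zero.) -/
theorem log_series_close (p : ℕ) [Fact p.Prime]
    (K : Type*) [NormedField K] [CompleteSpace K]
    [Algebra ℚ_[p] K]
    (hna : IsNonarchimedean (fun x : K => ‖x‖))
    (hiso : ∀ x : ℚ_[p], ‖algebraMap ℚ_[p] K x‖ = ‖x‖)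
    (u v : K) (hu : ‖u‖ < 1) (hv : ‖v‖ < 1)
    (ε : ℝ) (huv : ‖u - v‖ ≤ ε) (hε : ε ≤ (p : ℝ) ^ (-1 / ((p : ℝ) - 1))) :
    Summable (fun i : ℕ => u ^ i / (i : K)) ∧
    Summable (fun i : ℕ => v ^ i / (i : K)) ∧
    ‖(∑' i : ℕ, u ^ i / (i : K)) - ∑' i : ℕ, v ^ i / (i : K)‖ ≤ ε := by
  have : IsUltrametricDist K := .isUltrametricDist_of_isNonarchimedean_norm hna
  have hp : p.Prime := Fact.out
  have hε₀ : 0 ≤ ε := (norm_nonneg _).trans huv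
  have hnorm (n : ℕ) : ‖(n : K)‖ = ‖(n : ℚ_[p])‖ := by
    rw [← map_natCast (algebraMap ℚ_[p] K), hiso]
  have hnat (n : ℕ) : (n : ℝ)⁻¹ ≤ ‖(n : K)‖ := hnorm n ▸ Padic.inv_natCast_le_norm n
  have hcoprime (n : ℕ) (hn : ¬p ∣ n) : ‖(n : K)‖ = 1 := by
    rw [hnorm, Padic.norm_natCast_eq_one_iff, hp.coprime_iff_not_dvd]
    exact hn
  have hεp : ε ^ (p - 1) ≤ ‖(p : K)‖ := by
    rw [hnorm, Padic.norm_p]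
    exact pow_pred_le_inv_of_le_rpow hp.one_lt hε₀ hε
  have hsu := summable_pow_div_natCast hnat hu
  have hsv := summable_pow_div_natCast hnat hv
  refine ⟨hsu, hsv, ?_⟩
  rw [← hsu.tsum_sub hsv]
  refine IsUltrametricDist.norm_tsum_le_of_forall_le_of_nonneg hε₀ fun n => ?_
  rw [div_sub_div_same, norm_div]
  exact div_le_of_le_mul₀ (norm_nonneg _) hε₀
    (norm_pow_sub_pow_le_mul_norm_natCast hp hcoprime hu.le hv.le huv hεp n)
end

section
/- Let u, v ∈ K with ‖u‖ ≤ 1 and ‖v‖ ≤ 1, and let ε be a real number with ‖u − v‖ ≤ ε ≤ p^{−1/(p−1)}. Then for every natural number s one has ‖u^{p^s} − v^{p^s}‖ ≤ p^{−s} · ε. -/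
open Finset in
private lemma na_sum_bound {K : Type*} [NormedField K]
    (hna : IsNonarchimedean (fun x : K => ‖x‖)) (n : ℕ) (f : ℕ → K) (t : ℝ)
    (ht : 0 ≤ t) (h : ∀ i < n, ‖f i‖ ≤ t) :
    ‖∑ i ∈ Finset.range n, f i‖ ≤ t := by
  induction n with
  | zero => simpa using ht
  | succ n ih =>
      rw [Finset.sum_range_succ]
      refine le_trans (hna _ _) (max_le ?_ ?_)
      · exact ih fun i hi => h i (hi.trans (Nat.lt_succ_self n))
      · exact h n (Nat.lt_succ_self n)

private lemma norm_natCast_le_one {p : ℕ} [Fact p.Prime] {K : Type*} [NormedField K]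
    [Algebra ℚ_[p] K] (hiso : ∀ x : ℚ_[p], ‖algebraMap ℚ_[p] K x‖ = ‖x‖) (n : ℕ) :
    ‖(n : K)‖ ≤ 1 := by
  have : ((n : ℚ_[p]) : ℚ_[p]) = (n : ℚ_[p]) := rfl
  rw [show ((n : K)) = algebraMap ℚ_[p] K (n : ℚ_[p]) by simp, hiso]
  exact_mod_cast Padic.norm_int_le_one (n : ℤ)

private lemma one_step {p : ℕ} [Fact p.Prime] {K : Type*} [NormedField K]
    [Algebra ℚ_[p] K]
    (hna : IsNonarchimedean (fun x : K => ‖x‖))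
    (hiso : ∀ x : ℚ_[p], ‖algebraMap ℚ_[p] K x‖ = ‖x‖)
    (u v : K) (hu : ‖u‖ ≤ 1) (hv : ‖v‖ ≤ 1)
    (ε : ℝ) (huv : ‖u - v‖ ≤ ε) (hε : ε ≤ (p : ℝ) ^ (-1 / ((p : ℝ) - 1))) :
    ‖u ^ p - v ^ p‖ ≤ (p : ℝ)⁻¹ * ε := by
  have hp := (Fact.out : p.Prime)
  have hp1 : 1 < (p : ℝ) := by exact_mod_cast hp.one_lt
  have hppos : (0 : ℝ) < p := by positivity
  have hε0 : 0 ≤ ε := le_trans (norm_nonneg _) huv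
  set d := u - v with hd
  have hd1 : ‖d‖ ≤ 1 := by
    refine le_trans huv (le_trans hε ?_)
    refine Real.rpow_le_one_of_one_le_of_nonpos hp1.le ?_
    have : (0:ℝ) < (p : ℝ) - 1 := by linarith
    apply div_nonpos_of_nonpos_of_nonneg <;> linarith
  -- c^(p-1) = p⁻¹
  have hcpow : ((p : ℝ) ^ (-1 / ((p : ℝ) - 1))) ^ (p - 1 : ℕ) = (p : ℝ)⁻¹ := by
    have hne : (p : ℝ) - 1 ≠ 0 := by intro h; linarith
    rw [← Real.rpow_natCast ((p : ℝ) ^ (-1 / ((p : ℝ) - 1))) (p-1),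
      ← Real.rpow_mul hppos.le]
    have : ((p - 1 : ℕ) : ℝ) = (p : ℝ) - 1 := by
      have := hp.one_lt
      push_cast [Nat.cast_sub (le_of_lt this)]
      ring
    rw [this, div_mul_cancel₀ _ hne, Real.rpow_neg_one]
  have hεp : ε ^ (p - 1 : ℕ) ≤ (p : ℝ)⁻¹ := by
    rw [← hcpow]; exact pow_le_pow_left₀ hε0 hε _
  -- binomial expansion
  have hbin : u ^ p - v ^ p =
      ∑ k ∈ Finset.range p, d ^ (k + 1) * v ^ (p - (k + 1)) * (p.choose (k + 1) : K) := by
    have hu' : u = d + v := by rw [hd]; ring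
    rw [hu', add_pow, Finset.sum_range_succ' (fun k => d ^ k * v ^ (p - k) * (p.choose k : K)) p]
    simp
  rw [hbin]
  refine na_sum_bound hna _ _ _ (by positivity) ?_
  intro k hk
  rcases eq_or_lt_of_le (Nat.succ_le_of_lt hk) with heq | hlt
  · -- k + 1 = p : term d^p
    rw [show k + 1 = p from heq]
    simp only [Nat.sub_self, pow_zero, mul_one, Nat.choose_self, Nat.cast_one]
    have : ‖d ^ p‖ = ‖d‖ ^ p := norm_pow _ _
    rw [this]
    calc ‖d‖ ^ p ≤ ε ^ p := pow_le_pow_left₀ (norm_nonneg _) huv p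
      _ = ε ^ (p - 1 : ℕ) * ε := by
          rw [← pow_succ]
          congr 1
          omega
      _ ≤ (p : ℝ)⁻¹ * ε := by
          exact mul_le_mul_of_nonneg_right hεp hε0
  · -- k + 1 < p : p divides choose
    have hdvd : p ∣ p.choose (k + 1) := hp.dvd_choose_self (Nat.succ_ne_zero k) hlt
    obtain ⟨m, hm⟩ := hdvd
    have hnormp : ‖(p : K)‖ = (p : ℝ)⁻¹ := by
      rw [show ((p : K)) = algebraMap ℚ_[p] K (p : ℚ_[p]) by simp, hiso, Padic.norm_p]
    have hchoose : ‖(p.choose (k + 1) : K)‖ ≤ (p : ℝ)⁻¹ := by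
      rw [hm]
      push_cast
      rw [norm_mul, hnormp]
      calc (p : ℝ)⁻¹ * ‖(m : K)‖ ≤ (p : ℝ)⁻¹ * 1 :=
        mul_le_mul_of_nonneg_left (norm_natCast_le_one hiso m) (by positivity)
        _ = (p : ℝ)⁻¹ := mul_one _
    have hdk : ‖d ^ (k + 1)‖ ≤ ε := by
      rw [norm_pow]
      calc ‖d‖ ^ (k + 1) ≤ ‖d‖ ^ 1 := pow_le_pow_of_le_one (norm_nonneg _) hd1 (by omega)
        _ = ‖d‖ := pow_one _
        _ ≤ ε := huv
    calc ‖d ^ (k + 1) * v ^ (p - (k + 1)) * (p.choose (k + 1) : K)‖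
        = ‖d ^ (k + 1)‖ * ‖v ^ (p - (k + 1))‖ * ‖(p.choose (k + 1) : K)‖ := by
          rw [norm_mul, norm_mul]
      _ ≤ ε * 1 * (p : ℝ)⁻¹ := by
          refine mul_le_mul (mul_le_mul hdk ?_ (norm_nonneg _) hε0) hchoose
            (norm_nonneg _) (by positivity)
          rw [norm_pow]; exact pow_le_one₀ (norm_nonneg _) hv
      _ = (p : ℝ)⁻¹ * ε := by ring

/-- if `‖u‖ ≤ 1`, `‖v‖ ≤ 1` and `‖u - v‖ ≤ ε ≤ p^{-1/(p-1)}`,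
then `‖u^(p^s) - v^(p^s)‖ ≤ p^{-s}·ε` for every natural number `s`. -/
theorem pow_p_pow_close (p : ℕ) [Fact p.Prime]
    (K : Type*) [NormedField K] [CompleteSpace K]
    [Algebra ℚ_[p] K]
    (hna : IsNonarchimedean (fun x : K => ‖x‖))
    (hiso : ∀ x : ℚ_[p], ‖algebraMap ℚ_[p] K x‖ = ‖x‖)
    (u v : K) (hu : ‖u‖ ≤ 1) (hv : ‖v‖ ≤ 1)
    (ε : ℝ) (huv : ‖u - v‖ ≤ ε) (hε : ε ≤ (p : ℝ) ^ (-1 / ((p : ℝ) - 1))) :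
    ∀ s : ℕ, ‖u ^ (p ^ s) - v ^ (p ^ s)‖ ≤ ((p : ℝ) ^ s)⁻¹ * ε := by
  have hp := (Fact.out : p.Prime)
  have hp1 : 1 < (p : ℝ) := by exact_mod_cast hp.one_lt
  have hε0 : 0 ≤ ε := le_trans (norm_nonneg _) huv
  intro s
  induction s with
  | zero => simpa using huv
  | succ s ih =>
      have hps : (0:ℝ) < (p : ℝ) ^ s := by positivity
      have h1 : ((p : ℝ) ^ s)⁻¹ * ε ≤ ε := by
        calc ((p : ℝ) ^ s)⁻¹ * ε ≤ 1 * ε := by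
              refine mul_le_mul_of_nonneg_right ?_ hε0
              rw [inv_le_one_iff₀]; right; exact one_le_pow₀ hp1.le
          _ = ε := one_mul _
      have key : ‖u ^ (p ^ (s + 1)) - v ^ (p ^ (s + 1))‖ ≤ (p : ℝ)⁻¹ * (((p : ℝ) ^ s)⁻¹ * ε) := by
        rw [pow_succ, pow_mul, pow_mul]
        exact one_step hna hiso (u ^ (p ^ s)) (v ^ (p ^ s))
          (by rw [norm_pow]; exact pow_le_one₀ (norm_nonneg _) hu)
          (by rw [norm_pow]; exact pow_le_one₀ (norm_nonneg _) hv)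
          (((p : ℝ) ^ s)⁻¹ * ε) ih (h1.trans hε)
      calc ‖u ^ p ^ (s + 1) - v ^ p ^ (s + 1)‖ ≤ (p : ℝ)⁻¹ * (((p : ℝ) ^ s)⁻¹ * ε) := key
        _ = ((p : ℝ) ^ (s + 1))⁻¹ * ε := by rw [pow_succ, mul_inv]; ring
end

section
/- Let x ∈ ℚ_p with ‖x‖_p < 1 (equivalently ‖x‖_p ≤ p^{−1}) and let σ ≥ 1 be an integer. Set ℓ = ⌈log₂(σ+1)⌉. Then there exist integers x_1, …, x_ℓ such that for every s ∈ {1,…,ℓ}: x_s is divisible by p^{max(1, 2^{s−1}−1)}, 0 ≤ x_s < p^{2^s−1}, and the product satisfies ‖(1 − x) − ∏_{s=1}^{ℓ} (1 − x_s)‖_p ≤ p^{−σ} (the integers x_s being viewed in ℚ_p via the canonical map). -/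
/-!
If `‖1 - u‖ ≤ p⁻ᵐ` with `m ≥ 1`, let `a` be `1 - u` truncated to its first `N ≥ m` digits. Then
`p ^ m ∣ a`, so `1 - a` is a unit of norm one and `u / (1 - a) ≡ 1 mod p ^ N`. Peeling off
digit blocks ending at positions `2 ^ s - 1` for `s = 1, …, ℓ` leaves an error of norm at most
`p ^ (1 - 2 ^ ℓ) ≤ p⁻σ`.
-/

open IsUltrametricDist

lemma IsUltrametricDist.norm_sub_le_max {S : Type*} [SeminormedAddGroup S] [IsUltrametricDist S]
    (x y : S) : ‖x - y‖ ≤ max ‖x‖ ‖y‖ := by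
  simpa only [sub_eq_add_neg, norm_neg] using norm_add_le_max x (-y)

lemma IsUltrametricDist.norm_one_sub_of_norm_lt_one {R : Type*} [SeminormedRing R] [NormOneClass R]
    [IsUltrametricDist R] {b : R} (hb : ‖b‖ < 1) : ‖1 - b‖ = 1 := by
  rw [sub_eq_add_neg, norm_add_eq_max_of_norm_ne_norm (by rw [norm_one, norm_neg]; exact hb.ne'),
    norm_one, norm_neg, max_eq_left hb.le]

namespace Padic

variable {p : ℕ} [Fact p.Prime]

lemma exists_nat_lt_pow_norm_sub_le {y : ℚ_[p]} (hy : ‖y‖ ≤ 1) (N : ℕ) :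
    ∃ a : ℕ, a < p ^ N ∧ ‖y - a‖ ≤ (p : ℝ) ^ (-(N : ℤ)) := by
  set z : ℤ_[p] := ⟨y, hy⟩
  refine ⟨z.appr N, z.appr_lt N, ?_⟩
  have h := (PadicInt.norm_le_pow_iff_mem_span_pow _ N).2 (z.appr_spec N)
  rwa [PadicInt.norm_def, PadicInt.coe_sub, PadicInt.coe_natCast] at h

lemma exists_one_sub_mul_eq {u : ℚ_[p]} {m N : ℕ} (hm : 1 ≤ m) (hmN : m ≤ N)
    (hu : ‖1 - u‖ ≤ (p : ℝ) ^ (-(m : ℤ))) :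
    ∃ a : ℕ, a < p ^ N ∧ p ^ m ∣ a ∧
      ∃ v : ℚ_[p], u = (1 - a) * v ∧ ‖1 - v‖ ≤ (p : ℝ) ^ (-(N : ℤ)) := by
  have hp : (1 : ℝ) < p := mod_cast (Fact.out : p.Prime).one_lt
  have hpm : (p : ℝ) ^ (-(m : ℤ)) < 1 := zpow_lt_one_of_neg₀ hp (by omega)
  have hpN : (p : ℝ) ^ (-(N : ℤ)) ≤ (p : ℝ) ^ (-(m : ℤ)) := zpow_le_zpow_right₀ hp.le (by omega)
  obtain ⟨a, haN, hua⟩ := exists_nat_lt_pow_norm_sub_le (hu.trans hpm.le) N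
  have ha : ‖(a : ℚ_[p])‖ ≤ (p : ℝ) ^ (-(m : ℤ)) :=
    calc ‖(a : ℚ_[p])‖ = ‖(1 - u) - (1 - u - a)‖ := by rw [sub_sub_cancel]
      _ ≤ (p : ℝ) ^ (-(m : ℤ)) := (norm_sub_le_max _ _).trans (max_le hu (hua.trans hpN))
  have hunit : ‖1 - (a : ℚ_[p])‖ = 1 := norm_one_sub_of_norm_lt_one (ha.trans_lt hpm)
  have hne : 1 - (a : ℚ_[p]) ≠ 0 := norm_ne_zero_iff.1 (by rw [hunit]; exact one_ne_zero)
  refine ⟨a, haN, ?_, u / (1 - a), (mul_div_cancel₀ u hne).symm, ?_⟩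
  · exact_mod_cast (norm_int_le_pow_iff_dvd (a : ℤ) m).1 (by exact_mod_cast ha)
  · calc ‖1 - u / (1 - a)‖ = ‖(1 - u - a) / (1 - a)‖ := by
          rw [one_sub_div hne]; ring_nf
      _ ≤ (p : ℝ) ^ (-(N : ℤ)) := by rwa [norm_div, hunit, div_one]

theorem exists_digit_bursts {e : ℕ → ℕ} (he : Monotone e) (he0 : 1 ≤ e 0) (n : ℕ) {u : ℚ_[p]}
    (hu : ‖1 - u‖ ≤ (p : ℝ) ^ (-(e 0 : ℤ))) :
    ∃ xs : Fin n → ℤ,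
      (∀ i : Fin n, (p : ℤ) ^ e i ∣ xs i ∧ 0 ≤ xs i ∧ xs i < (p : ℤ) ^ e (i + 1)) ∧
      ‖u - ∏ i, (1 - (xs i : ℚ_[p]))‖ ≤ (p : ℝ) ^ (-(e n : ℤ)) := by
  induction n generalizing e u with
  | zero => exact ⟨Fin.elim0, fun i => i.elim0, by simpa [norm_sub_rev] using hu⟩
  | succ n ih =>
    obtain ⟨a, haN, hadvd, v, rfl, hv⟩ := exists_one_sub_mul_eq he0 (he (Nat.zero_le 1)) hu
    obtain ⟨xs, hxs, hprod⟩ :=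
      ih (e := fun i => e (i + 1)) (fun i j h => he (by omega)) (he0.trans (he (by omega))) hv
    refine ⟨Fin.cons (a : ℤ) xs, fun i => ?_, ?_⟩
    · refine Fin.cases ?_ (fun j => ?_) i
      · simp only [Fin.cons_zero, Fin.val_zero, zero_add]
        exact ⟨mod_cast hadvd, Int.natCast_nonneg a, mod_cast haN⟩
      · simpa only [Fin.cons_succ, Fin.val_succ] using hxs j
    · have hunit : ‖1 - (a : ℚ_[p])‖ ≤ 1 := by
        simpa using norm_int_le_one (1 - a : ℤ)
      rw [Fin.prod_univ_succ]
      simp only [Fin.cons_zero, Fin.cons_succ, Int.cast_natCast]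
      rw [← mul_sub, norm_mul]
      exact (mul_le_of_le_one_left (norm_nonneg _) hunit).trans hprod

end Padic

theorem digit_burst_log_general (p : ℕ) [Fact p.Prime]
    (x : ℚ_[p]) (hx : ‖x‖ < 1) (σ : ℕ) :
    ∃ xs : Fin (Nat.clog 2 (σ + 1)) → ℤ,
      (∀ i : Fin (Nat.clog 2 (σ + 1)),
        ((p : ℤ) ^ (max 1 (2 ^ (i : ℕ) - 1)) ∣ xs i) ∧
        0 ≤ xs i ∧ xs i < (p : ℤ) ^ (2 ^ ((i : ℕ) + 1) - 1)) ∧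
      ‖(1 - x) - ∏ i : Fin (Nat.clog 2 (σ + 1)), (1 - (xs i : ℚ_[p]))‖ ≤ (p : ℝ) ^ (-(σ : ℤ)) := by
  set e : ℕ → ℕ := fun k => max 1 (2 ^ k - 1)
  have he : Monotone e := fun j k h =>
    max_le_max le_rfl (Nat.sub_le_sub_right (Nat.pow_le_pow_right two_pos h) 1)
  have he_succ (k : ℕ) : e (k + 1) = 2 ^ (k + 1) - 1 := by
    have := Nat.one_lt_two_pow (Nat.succ_ne_zero k)
    simp only [e]; omega
  have hx' : ‖1 - (1 - x)‖ ≤ (p : ℝ) ^ (-(e 0 : ℤ)) := by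
    simpa [e] using (Padic.norm_le_pow_iff_norm_lt_pow_add_one x (-1)).2 (by simpa using hx)
  obtain ⟨xs, hxs, hprod⟩ := Padic.exists_digit_bursts he le_rfl (Nat.clog 2 (σ + 1)) hx'
  refine ⟨xs, fun i => by simpa only [he_succ] using hxs i, hprod.trans ?_⟩
  have hclog := Nat.le_pow_clog one_lt_two (σ + 1)
  have hp : (1 : ℝ) ≤ p := mod_cast (Fact.out : p.Prime).one_lt.le
  exact zpow_le_zpow_right₀ hp (by simp only [e]; omega)

/-- digit-burst decomposition for the p-adic logarithm, Lemma 3.2 with K = ℚ_p: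
given `x ∈ ℚ_p` with `‖x‖ < 1` and `σ ≥ 1`, with `ℓ = ⌈log₂(σ+1)⌉`, there are integers
`x_1, …, x_ℓ` (indexed by `i : Fin ℓ`, with `s = i + 1`) such that
`p^(max 1 (2^(s-1) - 1)) ∣ x_s`, `0 ≤ x_s < p^(2^s - 1)`, and
`‖(1 - x) - ∏ (1 - x_s)‖ ≤ p^(-σ)`. -/
theorem digit_burst_log (p : ℕ) [Fact p.Prime]
    (x : ℚ_[p]) (hx : ‖x‖ < 1) (σ : ℕ) (hσ : 1 ≤ σ) :
    ∃ xs : Fin (Nat.clog 2 (σ + 1)) → ℤ,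
      (∀ i : Fin (Nat.clog 2 (σ + 1)),
        ((p : ℤ) ^ (max 1 (2 ^ (i : ℕ) - 1)) ∣ xs i) ∧
        0 ≤ xs i ∧ xs i < (p : ℤ) ^ (2 ^ ((i : ℕ) + 1) - 1)) ∧
      ‖(1 - x) - ∏ i : Fin (Nat.clog 2 (σ + 1)), (1 - (xs i : ℚ_[p]))‖ ≤ (p : ℝ) ^ (-(σ : ℤ)) :=
  digit_burst_log_general p x hx σ
end

section
/- Let x ∈ K with 0 < ‖x‖ < p^{−1/(p−1)}. Then the family (x^n/n!)_{n∈ℕ} is summable in K, and the p-adic exponential exp(x) := ∑_{n≥0} x^n/n! satisfies ‖exp(x) − 1‖ = ‖x‖; in particular ‖exp(x) − 1‖ < 1, i.e. exp takes its values in the open unit disk centered at 1. -/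
open IsUltrametricDist in
/-- for `0 < ‖x‖ < p^{-1/(p-1)}` the exponential series is summable
and `‖exp(x) - 1‖ = ‖x‖ < 1`. -/
theorem padic_exp_norm (p : ℕ) [Fact p.Prime]
    (K : Type*) [NormedField K] [CompleteSpace K]
    [Algebra ℚ_[p] K]
    (hna : IsNonarchimedean (fun x : K => ‖x‖))
    (hiso : ∀ x : ℚ_[p], ‖algebraMap ℚ_[p] K x‖ = ‖x‖)
    (x : K) (hx0 : 0 < ‖x‖) (hx : ‖x‖ < (p : ℝ) ^ (-1 / ((p : ℝ) - 1))) :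
    Summable (fun n : ℕ => x ^ n / (n.factorial : K)) ∧
    ‖(∑' n : ℕ, x ^ n / (n.factorial : K)) - 1‖ = ‖x‖ ∧
    ‖(∑' n : ℕ, x ^ n / (n.factorial : K)) - 1‖ < 1 := by
  haveI : IsUltrametricDist K := isUltrametricDist_of_isNonarchimedean_norm hna
  have hp : p.Prime := Fact.out
  have hp1 : (1 : ℝ) < p := by exact_mod_cast hp.one_lt
  have hpm1 : (0 : ℝ) < (p : ℝ) - 1 := by linarith
  set f : ℕ → K := fun n => x ^ n / (n.factorial : K) with hf
  -- norm of factorials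
  have hnormfact : ∀ n : ℕ,
      ‖(n.factorial : K)‖ = (p : ℝ) ^ (-(padicValNat p n.factorial : ℤ)) := by
    intro n
    rw [← map_natCast (algebraMap ℚ_[p] K), hiso,
      Padic.norm_eq_zpow_neg_valuation (by exact_mod_cast n.factorial_ne_zero),
      Padic.valuation_natCast]
  -- valuation bound
  have hval : ∀ n : ℕ, 1 ≤ n →
      ((padicValNat p n.factorial : ℝ)) ≤ ((n : ℝ) - 1) / ((p : ℝ) - 1) := by
    intro n hn
    rw [le_div_iff₀ hpm1]
    have hleg := sub_one_mul_padicValNat_factorial (p := p) n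
    have hs : 1 ≤ (p.digits n).sum := by
      by_contra h
      push_neg at h
      interval_cases hsum : (p.digits n).sum
      have hlast := Nat.getLast_digit_ne_zero p (m := n) (by omega)
      exact hlast (List.sum_eq_zero_iff.mp hsum _ (List.getLast_mem _))
    have hnat : (p - 1) * padicValNat p n.factorial ≤ n - 1 := by omega
    have : ((p - 1 : ℕ) : ℝ) * (padicValNat p n.factorial : ℝ) ≤ ((n - 1 : ℕ) : ℝ) := by
      exact_mod_cast hnat
    have h2 : (2 : ℕ) ≤ p := hp.two_le
    rw [Nat.cast_sub (by omega), Nat.cast_sub hn] at this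
    push_cast at this ⊢
    linarith
  set r : ℝ := ‖x‖ * (p : ℝ) ^ ((1 : ℝ) / ((p : ℝ) - 1)) with hr
  have hppos : (0 : ℝ) < (p : ℝ) ^ ((1 : ℝ) / ((p : ℝ) - 1)) :=
    Real.rpow_pos_of_pos (by linarith) _
  have hrpos : 0 < r := mul_pos hx0 hppos
  have hr1 : r < 1 := by
    have : r < (p : ℝ) ^ (-1 / ((p : ℝ) - 1)) * (p : ℝ) ^ ((1 : ℝ) / ((p : ℝ) - 1)) :=
      mul_lt_mul_of_pos_right hx hppos
    rwa [← Real.rpow_add (by linarith), neg_div, neg_add_cancel, Real.rpow_zero] at this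
  -- key bound
  have hkey : ∀ n : ℕ, 1 ≤ n → ‖f n‖ ≤ ‖x‖ * r ^ (n - 1) := by
    intro n hn
    have hfn : ‖f n‖ = ‖x‖ ^ n * (p : ℝ) ^ ((padicValNat p n.factorial : ℤ)) := by
      rw [hf]
      simp only [norm_div, norm_pow, hnormfact n, zpow_neg]
      rw [div_eq_mul_inv, inv_inv]
    rw [hfn]
    have hz : ((p : ℝ) ^ ((padicValNat p n.factorial : ℤ)))
        = (p : ℝ) ^ ((padicValNat p n.factorial : ℝ)) := by
      rw [← Real.rpow_intCast]
      norm_num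
    rw [hz]
    have h1 : (p : ℝ) ^ ((padicValNat p n.factorial : ℝ))
        ≤ (p : ℝ) ^ (((n : ℝ) - 1) / ((p : ℝ) - 1)) :=
      Real.rpow_le_rpow_of_exponent_le hp1.le (hval n hn)
    have h2 : (p : ℝ) ^ (((n : ℝ) - 1) / ((p : ℝ) - 1))
        = ((p : ℝ) ^ ((1 : ℝ) / ((p : ℝ) - 1))) ^ (n - 1) := by
      rw [← Real.rpow_natCast ((p : ℝ) ^ ((1 : ℝ) / ((p : ℝ) - 1))) (n - 1),
        ← Real.rpow_mul (by positivity), Nat.cast_sub hn]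
      ring_nf
    have h3 : ‖x‖ ^ n = ‖x‖ * ‖x‖ ^ (n - 1) := by
      rw [← pow_succ']
      congr 1
      omega
    calc ‖x‖ ^ n * (p : ℝ) ^ ((padicValNat p n.factorial : ℝ))
        ≤ ‖x‖ ^ n * (p : ℝ) ^ (((n : ℝ) - 1) / ((p : ℝ) - 1)) := by
          exact mul_le_mul_of_nonneg_left h1 (by positivity)
      _ = ‖x‖ * r ^ (n - 1) := by
          rw [h2, h3, hr, mul_pow]; ring
  -- summability
  have htend : Filter.Tendsto f Filter.atTop (nhds 0) := by
    apply squeeze_zero_norm' (a := fun n => ‖x‖ * r ^ (n - 1))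
    · filter_upwards [Filter.eventually_ge_atTop 1] with n hn using hkey n hn
    · rw [show (0 : ℝ) = ‖x‖ * 0 by ring]
      exact (tendsto_pow_atTop_nhds_zero_of_lt_one hrpos.le hr1
        |>.comp (Filter.tendsto_sub_atTop_nat 1)).const_mul ‖x‖
  have hsum : Summable f := by
    apply NonarchimedeanAddGroup.summable_of_tendsto_cofinite_zero
    rwa [Nat.cofinite_eq_atTop]
  refine ⟨hsum, ?_⟩
  -- split off first two terms
  have hsum1 : Summable (fun n => f (n + 1)) := (summable_nat_add_iff 1).mpr hsum
  have h0 : ∑' n, f n = f 0 + ∑' n, f (n + 1) := Summable.tsum_eq_zero_add hsum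
  have h1 : ∑' n, f (n + 1) = f 1 + ∑' n, f (n + 2) := Summable.tsum_eq_zero_add hsum1
  have hf0 : f 0 = 1 := by simp [hf]
  have hf1 : f 1 = x := by simp [hf]
  set rest : K := ∑' n, f (n + 2) with hrest
  have hS : (∑' n, f n) - 1 = x + rest := by
    rw [h0, h1, hf0, hf1]; ring
  have hrest_le : ‖rest‖ ≤ ‖x‖ * r := by
    apply norm_tsum_le_of_forall_le_of_nonneg (by positivity)
    intro n
    calc ‖f (n + 2)‖ ≤ ‖x‖ * r ^ (n + 1) := by simpa using hkey (n + 2) (by omega)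
      _ ≤ ‖x‖ * r ^ 1 := by
          have := pow_le_pow_of_le_one hrpos.le hr1.le (show 1 ≤ n + 1 by omega)
          exact mul_le_mul_of_nonneg_left this (norm_nonneg x)
      _ = ‖x‖ * r := by ring
  have hrest_lt : ‖rest‖ < ‖x‖ :=
    hrest_le.trans_lt (by nlinarith)
  have hnorm : ‖(∑' n, f n) - 1‖ = ‖x‖ := by
    rw [hS, norm_add_eq_max_of_norm_ne_norm (by exact fun h => absurd h.symm hrest_lt.ne),
      max_eq_left hrest_lt.le]
  refine ⟨hnorm, ?_⟩
  rw [hnorm]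
  calc ‖x‖ < (p : ℝ) ^ (-1 / ((p : ℝ) - 1)) := hx
    _ ≤ 1 := Real.rpow_le_one_of_one_le_of_nonpos hp1.le
        (by rw [neg_div]; exact neg_nonpos.mpr (by positivity))
end

section
/- Suppose the formal power series y = ∑_{n≥0} y_n t^n ∈ R⟦t⟧ satisfies a_r(t)·y^{(r)}(t) + ⋯ + a_1(t)·y'(t) + a_0(t)·y(t) = 0, where y^{(i)} denotes the i-th formal derivative. Set s = r + d, extend the coefficient sequence by y_n = 0 for n < 0, and for 0 ≤ j ≤ s and n ∈ ℤ define b_j(n) = ∑_{i=0}^{r} a_{i, i−r+j} · (n−j)(n−j−1)⋯(n−j−i+1), where a_{i,k} denotes the coefficient of t^k in a_i(t) (taken to be 0 when k < 0 or k > d) and the integers are mapped into R. Then for every n ∈ ℤ one has b_0(n)·y_n + b_1(n)·y_{n−1} + ⋯ + b_s(n)·y_{n−s} = 0, and moreover b_0(n) = a_r(0) · n(n−1)⋯(n−r+1). -/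
/-! Extend the coefficients of a power series by zero to all integer indices
(`PowerSeries.intCoeff`). Then the coefficient of `t^(x-i)` in `y⁽ⁱ⁾` is
`x(x-1)⋯(x-i+1) · y_x` for every integer `x` (for `0 ≤ x < i` both sides vanish because the
falling factorial does), and multiplying by a polynomial of degree `≤ d` is a convolution over
`0 ≤ k ≤ d`. Reading off the coefficient of `t^(n-r)` in the differential equation and
substituting `j = k + r - i` gives the recurrence. Only `i = r` contributes to `b_0`, since
`a_{i,i-r} = 0` for `i < r`. -/

open Polynomial PowerSeries

theorem Finset.sum_range_comp_sub_natCast {M : Type*} [AddCommMonoid M] (f : ℤ → M) {c e d : ℕ}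
    (hce : c ≤ e) (hneg : ∀ k < 0, f k = 0) (hgt : ∀ k > (d : ℤ), f k = 0) :
    ∑ j ∈ range (e + d + 1), f (j - c) = ∑ k ∈ range (d + 1), f k := by
  obtain ⟨t, rfl⟩ := Nat.exists_eq_add_of_le hce
  rw [show c + t + d + 1 = c + (t + d + 1) by ring, sum_range_add,
    sum_eq_zero fun j hj => hneg _ (by simp at hj; omega), zero_add]
  push_cast
  simp only [add_sub_cancel_left]
  exact (sum_subset (range_subset_range.mpr (by omega))
    fun k _ hk => hgt _ (by simp at hk; omega)).symm

namespace PowerSeries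

variable {R : Type*} [CommRing R]

variable (R) in
noncomputable def intCoeff (n : ℤ) : R⟦X⟧ →ₗ[R] R :=
  if 0 ≤ n then coeff n.toNat else 0

@[simp]
theorem intCoeff_natCast (n : ℕ) (f : R⟦X⟧) : intCoeff R n f = coeff n f := by
  simp [intCoeff]

theorem intCoeff_of_neg {n : ℤ} (hn : n < 0) (f : R⟦X⟧) : intCoeff R n f = 0 := by
  simp [intCoeff, not_le.mpr hn]

theorem intCoeff_X_pow_mul (f : R⟦X⟧) (k : ℕ) (n : ℤ) :
    intCoeff R n (X ^ k * f) = intCoeff R (n - k) f := by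
  rcases lt_or_ge n 0 with hn | hn
  · rw [intCoeff_of_neg hn, intCoeff_of_neg (by omega)]
  · lift n to ℕ using hn
    rw [intCoeff_natCast, coeff_X_pow_mul']
    split_ifs with hk
    · rw [← Nat.cast_sub hk, intCoeff_natCast]
    · rw [intCoeff_of_neg (by omega)]

theorem intCoeff_coe_mul {p : R[X]} {d : ℕ} (hp : p.natDegree ≤ d) (f : R⟦X⟧) (n : ℤ) :
    intCoeff R n (p * f) = ∑ k ∈ Finset.range (d + 1), p.coeff k * intCoeff R (n - k) f := by
  conv_lhs => rw [p.as_sum_range_C_mul_X_pow' (Nat.lt_succ_of_le hp)]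
  rw [← coeToPowerSeries.ringHom_apply, map_sum, Finset.sum_mul, map_sum]
  refine Finset.sum_congr rfl fun k _ => ?_
  rw [coeToPowerSeries.ringHom_apply, Polynomial.coe_mul, Polynomial.coe_pow, Polynomial.coe_C,
    Polynomial.coe_X, mul_assoc, ← smul_eq_C_mul, map_smul, intCoeff_X_pow_mul, smul_eq_mul]

theorem intCoeff_iterate_derivative (f : R⟦X⟧) (i : ℕ) (x : ℤ) :
    intCoeff R (x - i) ((d⁄dX R)^[i] f) =
      (((descPochhammer ℤ i).eval x : ℤ) : R) * intCoeff R x f := by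
  rcases lt_or_ge x i with hx | hx
  · rw [intCoeff_of_neg (by omega)]
    rcases lt_or_ge x 0 with hx0 | hx0
    · rw [intCoeff_of_neg hx0, mul_zero]
    · lift x to ℕ using hx0
      rw [descPochhammer_eval_coe_nat_of_lt (R := ℤ) (by omega : x < i), Int.cast_zero, zero_mul]
  · obtain ⟨l, rfl⟩ : ∃ l : ℕ, x = l + i := ⟨(x - i).toNat, by omega⟩
    rw [add_sub_cancel_right, descPochhammer_int_eq_ascFactorial, ← Nat.cast_add, intCoeff_natCast,
      intCoeff_natCast, coeff_iterate_derivative, Int.cast_natCast]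

theorem sum_range_mul_intCoeff_iterate_derivative {p : R[X]} {d : ℕ} (hp : p.natDegree ≤ d)
    (c : ℤ → R) (hc : ∀ k, c k = if 0 ≤ k then p.coeff k.toNat else 0) (f : R⟦X⟧) {i r : ℕ}
    (hir : i ≤ r) (n : ℤ) :
    ∑ j ∈ Finset.range (r + d + 1),
      c ((i : ℤ) - r + j) * (∏ m ∈ Finset.range i, ((n - j - m : ℤ) : R)) * intCoeff R (n - j) f =
      intCoeff R (n - r) (p * (d⁄dX R)^[i] f) := by
  calc _ = ∑ j ∈ Finset.range (r + d + 1), c (j - (r - i : ℕ)) *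
        intCoeff R (n - r - (j - (r - i : ℕ))) ((d⁄dX R)^[i] f) := by
        refine Finset.sum_congr rfl fun j _ => ?_
        rw [show n - r - (j - (r - i : ℕ) : ℤ) = n - j - i by omega, intCoeff_iterate_derivative,
          descPochhammer_eval_eq_prod_range, Int.cast_prod, mul_assoc,
          show (i : ℤ) - r + j = j - (r - i : ℕ) by omega]
    _ = ∑ k ∈ Finset.range (d + 1), c k * intCoeff R (n - r - k) ((d⁄dX R)^[i] f) :=
        Finset.sum_range_comp_sub_natCast (fun k => c k * intCoeff R (n - r - k) ((d⁄dX R)^[i] f))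
          (Nat.sub_le r i) (fun k hk => by simp [hc, not_le.mpr hk])
          (fun k hk => by
            simp [hc, coeff_eq_zero_of_natDegree_lt (hp.trans_lt (by omega : d < k.toNat))])
    _ = intCoeff R (n - r) (p * (d⁄dX R)^[i] f) := by simp [hc, intCoeff_coe_mul hp]

end PowerSeries

/-- if `y = ∑ yₙ tⁿ` satisfies `∑_{i=0}^r aᵢ(t)·y⁽ⁱ⁾(t) = 0` with
`deg aᵢ ≤ d`, then, with `s = r + d`, the extended coefficient sequence `Y : ℤ → R`
(`Y n = yₙ` for `n ≥ 0` and `Y n = 0` for `n < 0`) satisfies the recurrence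
`∑_{j=0}^s b_j(n)·Y(n-j) = 0` for all `n ∈ ℤ`, where
`b_j(n) = ∑_{i=0}^r a_{i,i-r+j}·(n-j)(n-j-1)⋯(n-j-i+1)`; moreover
`b_0(n) = a_r(0)·n(n-1)⋯(n-r+1)`. -/
theorem ode_to_recurrence (R : Type*) [CommRing R] (r d : ℕ)
    (a : Fin (r + 1) → Polynomial R) (ha : ∀ i, (a i).natDegree ≤ d)
    (y : PowerSeries R)
    (hy : ∑ i : Fin (r + 1),
      ((a i : PowerSeries R) * (⇑(PowerSeries.derivative R))^[(i : ℕ)] y) = 0)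
    (Y : ℤ → R)
    (hY0 : ∀ n : ℕ, Y (n : ℤ) = PowerSeries.coeff (R := R) n y)
    (hYneg : ∀ n : ℤ, n < 0 → Y n = 0)
    (ac : Fin (r + 1) → ℤ → R)
    (hac : ∀ (i : Fin (r + 1)) (k : ℤ),
      ac i k = if 0 ≤ k then (a i).coeff k.toNat else 0)
    (b : ℕ → ℤ → R)
    (hb : ∀ (j : ℕ) (n : ℤ), b j n =
      ∑ i : Fin (r + 1), ac i ((i : ℤ) - (r : ℤ) + (j : ℤ)) *
        ∏ m ∈ Finset.range (i : ℕ), ((n - (j : ℤ) - (m : ℤ) : ℤ) : R)) :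
    (∀ n : ℤ, ∑ j ∈ Finset.range (r + d + 1), b j n * Y (n - (j : ℤ)) = 0) ∧
    (∀ n : ℤ, b 0 n = (a (Fin.last r)).coeff 0 *
      ∏ m ∈ Finset.range r, ((n - (m : ℤ) : ℤ) : R)) := by
  have hYy : Y = fun x => intCoeff R x y := funext fun x => by
    rcases lt_or_ge x 0 with hx | hx
    · rw [hYneg x hx, intCoeff_of_neg hx]
    · lift x to ℕ using hx
      rw [hY0, intCoeff_natCast]
  refine ⟨fun n => ?_, fun n => ?_⟩
  · calc ∑ j ∈ Finset.range (r + d + 1), b j n * Y (n - j)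
        = ∑ i : Fin (r + 1), ∑ j ∈ Finset.range (r + d + 1), ac i ((i : ℤ) - r + j) *
            (∏ m ∈ Finset.range i, ((n - j - m : ℤ) : R)) * intCoeff R (n - j) y := by
          simp_rw [hb, hYy, Finset.sum_mul]
          exact Finset.sum_comm
      _ = ∑ i : Fin (r + 1), intCoeff R (n - r) (a i * (d⁄dX R)^[i] y) :=
          Finset.sum_congr rfl fun i _ =>
            sum_range_mul_intCoeff_iterate_derivative (ha i) (ac i) (hac i) y i.is_le n
      _ = 0 := by rw [← map_sum, hy, map_zero]
  · rw [hb, Finset.sum_eq_single (Fin.last r) (fun i _ hi => by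
      rw [hac, if_neg (by have := Fin.val_lt_last hi; omega), zero_mul]) (by simp)]
    simp [hac]
end
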